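/- arXiv:2604.16989 — 13 statements merged into one kernel-verified Lean document; each statement's English description precedes it below -/
import Mathlib

section
/- Packing lemma: for any time t and integer k ≥ 1, at most k elements x alive after operation t satisfy K_x ≤ k. -/
/-- Packing lemma for heaps. Model: a finite set `X` of eventually extracted
elements with distinct insertion times `ins` and extraction times `ext`,
`ins x < ext x`. An element `x` is alive after operation `t` iff
`ins x ≤ t < ext x`. With `K x = max_{ins x ≤ s < ext x} (|W_{s,x}| + 1)`,
where `W_{s,x}` is the set of elements inserted after `ins x` and alive at `s`:
for any time `t` and any integer `k ≥ 1`, at most `k` elements alive after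
operation `t` satisfy `K x ≤ k`. -/
theorem stmt1 {X : Type*} [Fintype X] (ins ext : X → ℕ)
    (h_inj : Function.Injective ins) (h_lt : ∀ x, ins x < ext x)
    (t k : ℕ) (hk : 1 ≤ k) :
    (Finset.univ.filter (fun x : X =>
        (ins x ≤ t ∧ t < ext x) ∧
        (Finset.Ico (ins x) (ext x)).sup
            (fun s => (Finset.univ.filter
              (fun y => ins x < ins y ∧ ins y ≤ s ∧ s < ext y)).card + 1) ≤ k)).card
      ≤ k := by
  classical
  set S := (Finset.univ.filter (fun x : X =>
        (ins x ≤ t ∧ t < ext x) ∧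
        (Finset.Ico (ins x) (ext x)).sup
            (fun s => (Finset.univ.filter
              (fun y => ins x < ins y ∧ ins y ≤ s ∧ s < ext y)).card + 1) ≤ k)) with hS
  rcases S.eq_empty_or_nonempty with h | h
  · simp [h]
  · obtain ⟨x, hxS, hxmin⟩ := S.exists_min_image ins h
    have hx := Finset.mem_filter.mp hxS
    obtain ⟨-, ⟨⟨hins, hext⟩, hsup⟩⟩ := hx
    -- W at time t
    set W := (Finset.univ.filter
              (fun y => ins x < ins y ∧ ins y ≤ t ∧ t < ext y)) with hW
    have htmem : t ∈ Finset.Ico (ins x) (ext x) := Finset.mem_Ico.mpr ⟨hins, hext⟩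
    have hWk : W.card + 1 ≤ k := le_trans (Finset.le_sup (f := fun s => (Finset.univ.filter (fun y => ins x < ins y ∧ ins y ≤ s ∧ s < ext y)).card + 1) htmem) hsup
    have hsub : S.erase x ⊆ W := by
      intro y hy
      have hyne : y ≠ x := Finset.ne_of_mem_erase hy
      have hyS := Finset.mem_of_mem_erase hy
      have hy' := Finset.mem_filter.mp hyS
      obtain ⟨-, ⟨⟨hins', hext'⟩, -⟩⟩ := hy'
      have hle : ins x ≤ ins y := hxmin y hyS
      have hlt : ins x < ins y := lt_of_le_of_ne hle (fun e => hyne (h_inj e.symm))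
      exact Finset.mem_filter.mpr ⟨Finset.mem_univ y, hlt, hins', hext'⟩
    have : S.card ≤ W.card + 1 := by
      have := Finset.card_le_card hsub
      have hc := Finset.card_erase_of_mem hxS
      omega
    omega
end

section
/- Counterexample to the preimage-partition conjecture: for every n ≥ 1 and M ≥ 1 there exist sets E, F and functions f_1, f_2, f_3 : E → F such that (1) f_i(x) ≠ f_j(x) for all x and i ≠ j; (2) for every z ∈ F some t ∈ {1,2,3} has |f_t^{-1}(z)| ≤ n; and (3) every partition of E into parts E_i with f_p(E_i) ∩ f_q(E_i) = ∅ for all i and p < q requires more than M parts. -/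
/-- Counterexample to the preimage-partition conjecture: for every `n ≥ 1` and
`M ≥ 1` there exist sets `E, F` and functions `f 0, f 1, f 2 : E → F` that are
pointwise distinct, such that every `z ∈ F` has some fiber `f t ⁻¹ {z}` of size
at most `n`, yet no partition of `E` into `M` parts `E_i` satisfies
`f p (E_i) ∩ f q (E_i) = ∅` for all `i` and `p < q`. (Since validity is
preserved by refining into more parts, this says more than `M` parts are
required.) -/
theorem stmt4 (n M : ℕ) (hn : 1 ≤ n) (hM : 1 ≤ M) :
    ∃ (E F : Type) (f : Fin 3 → E → F),
      (∀ x : E, ∀ p q : Fin 3, p ≠ q → f p x ≠ f q x) ∧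
      (∀ z : F, ∃ t : Fin 3, ({x : E | f t x = z}).encard ≤ n) ∧
      ¬ (∃ c : E → Fin M, ∀ (i : Fin M) (p q : Fin 3), p < q →
          ∀ x y : E, c x = i → c y = i → f p x ≠ f q y) := by
  classical
  set N := 2 ^ M + 1 with hN
  set E := {x : Fin N × Fin N // x.1 < x.2} with hE
  refine ⟨E, Fin N ⊕ E,
    fun t x => if t = 0 then Sum.inl x.1.1 else if t = 1 then Sum.inl x.1.2 else Sum.inr x,
    ?_, ?_, ?_⟩
  · intro x p q hpq
    have hne : x.1.1 ≠ x.1.2 := ne_of_lt x.2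
    fin_cases p <;> fin_cases q <;> simp_all <;> exact fun h => hne h.symm
  · intro z
    refine ⟨2, ?_⟩
    have h2 : ({x : E | (if (2 : Fin 3) = 0 then Sum.inl x.1.1 else
        if (2 : Fin 3) = 1 then Sum.inl x.1.2 else Sum.inr x) = z}) =
        {x : E | Sum.inr x = z} := rfl
    rw [h2]
    cases z with
    | inl v =>
        have : {x : E | Sum.inr x = Sum.inl v} = ∅ := by
          ext x; simp
        rw [this]
        simp
    | inr e =>
        have : {x : E | (Sum.inr x : Fin N ⊕ E) = Sum.inr e} = {e} := by
          ext x; simp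
        rw [this]
        rw [Set.encard_singleton]
        exact_mod_cast hn
  · rintro ⟨c, hc⟩
    set g : Fin N → Finset (Fin M) := fun v =>
      ((Finset.univ : Finset E).filter (fun x => x.1.2 = v)).image c with hg
    have hcard : Fintype.card (Finset (Fin M)) < Fintype.card (Fin N) := by
      simp [hN]
    obtain ⟨j, k, hjk, heq⟩ := Fintype.exists_ne_map_eq_of_card_lt g hcard
    have key : ∀ j k : Fin N, j < k → g j = g k → False := by
      intro j k hjk hgjk
      set x : E := ⟨(j, k), hjk⟩ with hx
      have hmem : c x ∈ g k := Finset.mem_image.mpr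
        ⟨x, Finset.mem_filter.mpr ⟨Finset.mem_univ _, rfl⟩, rfl⟩
      rw [← hgjk] at hmem
      obtain ⟨y, hy, hcy⟩ := Finset.mem_image.mp hmem
      have hy2 : y.1.2 = j := (Finset.mem_filter.mp hy).2
      have := hc (c x) 0 1 (by decide) x y rfl hcy
      simp only [hx] at this
      norm_num at this
      exact this hy2.symm
    rcases hjk.lt_or_gt with h | h
    · exact key j k h heq
    · exact key k j h heq.symm
end

section
/- The shift graph on pairs {(i,j) : 1 ≤ i < j ≤ m}, with (i,j) adjacent to (j,k), has chromatic number greater than M whenever m > 2^M. -/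
/-!
Given a proper colouring of the shift graph, record for each `i` the set `Φ i` of colours used on
the vertices `(i, j)`. For `i < k` the colour of `(i, k)` lies in `Φ i` but not in `Φ k`, since
every `(k, j)` is adjacent to `(i, k)`. So `Φ` is injective, and with `M` colours there are at
most `2 ^ M` indices `i`.
-/

namespace SimpleGraph

variable {V α : Type*} [LinearOrder V] {G : SimpleGraph {p : V × V // p.1 < p.2}}

def forwardColors (C : G.Coloring α) (i : V) : Set α :=
  {c | ∃ j, ∃ h : i < j, C ⟨(i, j), h⟩ = c}

theorem forwardColors_ne_of_lt (C : G.Coloring α)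
    (hG : ∀ i k j : V, ∀ (hik : i < k) (hkj : k < j), G.Adj ⟨(i, k), hik⟩ ⟨(k, j), hkj⟩)
    {i k : V} (hik : i < k) : forwardColors C i ≠ forwardColors C k := by
  intro heq
  obtain ⟨j, hkj, hcol⟩ : C ⟨(i, k), hik⟩ ∈ forwardColors C k := heq ▸ ⟨k, hik, rfl⟩
  exact C.valid (hG i k j hik hkj) hcol.symm

theorem forwardColors_injective (C : G.Coloring α)
    (hG : ∀ i k j : V, ∀ (hik : i < k) (hkj : k < j), G.Adj ⟨(i, k), hik⟩ ⟨(k, j), hkj⟩) :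
    Function.Injective (forwardColors C) :=
  Function.Injective.of_lt_imp_ne fun _ _ => forwardColors_ne_of_lt C hG

theorem card_le_two_pow_of_coloring [Fintype V] [Fintype α] (C : G.Coloring α)
    (hG : ∀ i k j : V, ∀ (hik : i < k) (hkj : k < j), G.Adj ⟨(i, k), hik⟩ ⟨(k, j), hkj⟩) :
    Fintype.card V ≤ 2 ^ Fintype.card α := by
  classical
  simpa only [Fintype.card_set] using
    Fintype.card_le_of_injective _ (forwardColors_injective C hG)

end SimpleGraph

/-- The shift graph `S_m` has vertex set `{(i,j) : i < j ≤ m}`, with distinct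
vertices `(i,j)`, `(i',j')` adjacent iff `j = i'` or `i = j'`. If `m > 2^M`,
its chromatic number exceeds `M`. -/
theorem stmt5 (m M : ℕ) (hm : 2 ^ M < m)
    (G : SimpleGraph {p : Fin m × Fin m // p.1 < p.2})
    (hG : ∀ u v : {p : Fin m × Fin m // p.1 < p.2},
      G.Adj u v ↔ (u ≠ v ∧ (u.val.2 = v.val.1 ∨ u.val.1 = v.val.2))) :
    (M : ℕ∞) < G.chromaticNumber := by
  rw [lt_iff_not_ge, SimpleGraph.chromaticNumber_le_iff_colorable]
  rintro ⟨C⟩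
  have hshift : ∀ i k j : Fin m, ∀ (hik : i < k) (hkj : k < j),
      G.Adj ⟨(i, k), hik⟩ ⟨(k, j), hkj⟩ := fun i k j hik hkj =>
    (hG _ _).2 ⟨fun h => hik.ne (congrArg (·.val.1) h), Or.inl rfl⟩
  have := SimpleGraph.card_le_two_pow_of_coloring C hshift
  simp only [Fintype.card_fin] at this
  omega
end

section
/- Pairwise n-boundedness implies bounded partition: if f_1,…,f_k : E → F are pointwise distinct and pairwise n-bounded, then E can be partitioned into 2nk(k−1)+1 parts E_i with f_p(E_i) ∩ f_q(E_i) = ∅ for every i and every p < q. -/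
attribute [local instance] Classical.propDecidable

section aux
variable {E F : Type*} {k n : ℕ} (f : Fin k → E → F)

/-- symmetric collision relation -/
private def MyAdj (x y : E) : Prop := ∃ p q : Fin k, p ≠ q ∧ f p x = f q y

/-- oriented collision: the fiber on the `y` side is small -/
private def MyArc (n : ℕ) (x y : E) : Prop :=
  ∃ p q : Fin k, p ≠ q ∧ f p x = f q y ∧ ({w : E | f q w = f p x}).encard ≤ n

private lemma arc_of_adj
    (hbd : ∀ z : F, ∀ p q : Fin k, p ≠ q →
      min ({x : E | f p x = z}).encard ({x : E | f q x = z}).encard ≤ n)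
    {x y : E} (h : MyAdj f x y) : MyArc f n x y ∨ MyArc f n y x := by
  obtain ⟨p, q, hpq, heq⟩ := h
  have := hbd (f p x) p q hpq
  rcases min_le_iff.1 this with h1 | h2
  · right
    exact ⟨q, p, hpq.symm, heq.symm, by rw [← heq]; exact h1⟩
  · left
    exact ⟨p, q, hpq, heq, h2⟩

/-- out-degree bound -/
private lemma out_bound (s : Finset E) (x : E) :
    (s.filter (fun y => MyArc f n x y)).card ≤ n * k * (k - 1) := by
  classical
  have hsub : s.filter (fun y => MyArc f n x y) ⊆
      (Finset.univ : Finset (Fin k × Fin k)).biUnion (fun pq =>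
        s.filter (fun y => pq.1 ≠ pq.2 ∧ f pq.2 y = f pq.1 x ∧
          ({w : E | f pq.2 w = f pq.1 x}).encard ≤ n)) := by
    intro y hy
    rw [Finset.mem_filter] at hy
    obtain ⟨hys, p, q, hpq, heq, hcard⟩ := hy
    refine Finset.mem_biUnion.2 ⟨(p, q), Finset.mem_univ _, ?_⟩
    exact Finset.mem_filter.2 ⟨hys, hpq, heq.symm, hcard⟩
  calc (s.filter (fun y => MyArc f n x y)).card
      ≤ _ := Finset.card_le_card hsub
    _ ≤ ∑ pq : Fin k × Fin k, (s.filter (fun y => pq.1 ≠ pq.2 ∧ f pq.2 y = f pq.1 x ∧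
          ({w : E | f pq.2 w = f pq.1 x}).encard ≤ n)).card := Finset.card_biUnion_le
    _ ≤ ∑ pq : Fin k × Fin k, (if pq.1 = pq.2 then 0 else n) := by
        apply Finset.sum_le_sum
        rintro ⟨p, q⟩ _
        dsimp only
        by_cases hpq : p = q
        · rw [if_pos hpq]
          have he : (s.filter (fun y => p ≠ q ∧ f q y = f p x ∧
              ({w : E | f q w = f p x}).encard ≤ n)) = ∅ :=
            Finset.filter_false_of_mem (fun y _ h => h.1 hpq)
          simp [he]
        · rw [if_neg hpq]
          by_cases hc : ({w : E | f q w = f p x}).encard ≤ n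
          · have hsub2 : ((s.filter (fun y => p ≠ q ∧ f q y = f p x ∧
                ({w : E | f q w = f p x}).encard ≤ n)) : Set E) ⊆ {w : E | f q w = f p x} := by
              intro y hy
              simp only [Finset.coe_filter, Set.mem_setOf_eq] at hy
              exact hy.2.2.1
            have := (Set.encard_le_encard hsub2).trans hc
            rwa [Set.encard_coe_eq_coe_finsetCard, Nat.cast_le] at this
          · have : (s.filter (fun y => p ≠ q ∧ f q y = f p x ∧
                ({w : E | f q w = f p x}).encard ≤ n)) = ∅ := by
              apply Finset.filter_false_of_mem
              rintro y _ ⟨-, -, h⟩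
              exact hc h
            simp [this]
    _ ≤ n * k * (k - 1) := by
        rw [Finset.sum_ite, Finset.sum_const_zero, Finset.sum_const, zero_add, smul_eq_mul]
        have hfd : (Finset.univ.filter (fun pq : Fin k × Fin k => ¬ pq.1 = pq.2)) =
            (Finset.univ : Finset (Fin k)).offDiag := by
          ext ⟨a, b⟩
          simp [Finset.mem_offDiag]
        have hcard : (Finset.univ.filter (fun pq : Fin k × Fin k => ¬ pq.1 = pq.2)).card
            = k * k - k := by
          rw [hfd, Finset.offDiag_card]
          simp
        have hk : k * k - k = k * (k - 1) := by
          cases k with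
          | zero => simp
          | succ m =>
            rw [Nat.succ_sub_one]
            have : (m + 1) * (m + 1) = (m + 1) * m + (m + 1) := by ring
            omega
        rw [hcard, hk]
        calc k * (k - 1) * n = n * k * (k - 1) := by ring
          _ ≤ n * k * (k - 1) := le_refl _

end aux

section aux2
variable {E F : Type*} {k n : ℕ} (f : Fin k → E → F)

private lemma min_deg
    (hbd : ∀ z : F, ∀ p q : Fin k, p ≠ q →
      min ({x : E | f p x = z}).encard ({x : E | f q x = z}).encard ≤ n)
    (s : Finset E) (hs : s.Nonempty) :
    ∃ v ∈ s, (s.filter (fun y => y ≠ v ∧ MyAdj f v y)).card ≤ 2 * (n * k * (k - 1)) := by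
  by_contra hcon
  push_neg at hcon
  set d := n * k * (k - 1) with hd
  have hsum : ∑ v ∈ s, (s.filter (fun y => y ≠ v ∧ MyAdj f v y)).card ≤ 2 * d * s.card := by
    have h1 : ∀ v ∈ s, (s.filter (fun y => y ≠ v ∧ MyAdj f v y)).card ≤
        (s.filter (fun y => MyArc f n v y)).card + (s.filter (fun y => MyArc f n y v)).card := by
      intro v _
      have hsub : s.filter (fun y => y ≠ v ∧ MyAdj f v y) ⊆
          s.filter (fun y => MyArc f n v y) ∪ s.filter (fun y => MyArc f n y v) := by
        intro y hy
        rw [Finset.mem_filter] at hy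
        rcases arc_of_adj f hbd hy.2.2 with h | h
        · exact Finset.mem_union_left _ (Finset.mem_filter.2 ⟨hy.1, h⟩)
        · exact Finset.mem_union_right _ (Finset.mem_filter.2 ⟨hy.1, h⟩)
      exact (Finset.card_le_card hsub).trans (Finset.card_union_le _ _)
    have hswap : ∑ v ∈ s, (s.filter (fun y => MyArc f n y v)).card
        = ∑ v ∈ s, (s.filter (fun y => MyArc f n v y)).card := by
      simp_rw [Finset.card_filter]
      exact Finset.sum_comm
    have hout : ∑ v ∈ s, (s.filter (fun y => MyArc f n v y)).card ≤ d * s.card := by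
      calc ∑ v ∈ s, (s.filter (fun y => MyArc f n v y)).card
          ≤ ∑ _v ∈ s, d := Finset.sum_le_sum (fun v _ => out_bound f s v)
        _ = d * s.card := by rw [Finset.sum_const, smul_eq_mul, mul_comm]
    calc ∑ v ∈ s, (s.filter (fun y => y ≠ v ∧ MyAdj f v y)).card
        ≤ ∑ v ∈ s, ((s.filter (fun y => MyArc f n v y)).card
            + (s.filter (fun y => MyArc f n y v)).card) := Finset.sum_le_sum h1
      _ = ∑ v ∈ s, (s.filter (fun y => MyArc f n v y)).card
            + ∑ v ∈ s, (s.filter (fun y => MyArc f n y v)).card := Finset.sum_add_distrib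
      _ ≤ d * s.card + d * s.card := by rw [hswap]; omega
      _ = 2 * d * s.card := by ring
  have h2 : s.card * (2 * d + 1) ≤ ∑ v ∈ s, (s.filter (fun y => y ≠ v ∧ MyAdj f v y)).card := by
    have := Finset.card_nsmul_le_sum s
      (fun v => (s.filter (fun y => y ≠ v ∧ MyAdj f v y)).card) (2 * d + 1)
      (fun v hv => hcon v hv)
    simpa [smul_eq_mul] using this
  have hpos : 0 < s.card := Finset.card_pos.2 hs
  nlinarith [hsum, h2]

private lemma greedy
    (hpd : ∀ x : E, ∀ p q : Fin k, p ≠ q → f p x ≠ f q x)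
    (hbd : ∀ z : F, ∀ p q : Fin k, p ≠ q →
      min ({x : E | f p x = z}).encard ({x : E | f q x = z}).encard ≤ n)
    (s : Finset E) :
    ∃ c : E → Fin (2 * n * k * (k - 1) + 1),
      ∀ x ∈ s, ∀ y ∈ s, ∀ p q : Fin k, p < q → c x = c y → f p x ≠ f q y := by
  induction s using Finset.strongInduction with
  | _ s ih =>
    rcases s.eq_empty_or_nonempty with rfl | hs
    · exact ⟨fun _ => ⟨0, by omega⟩, by simp⟩
    · obtain ⟨v, hv, hdeg⟩ := min_deg f hbd s hs
      obtain ⟨c, hc⟩ := ih (s.erase v) (Finset.erase_ssubset hv)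
      have hNcard : (((s.filter (fun y => y ≠ v ∧ MyAdj f v y)).image c)).card
          < Fintype.card (Fin (2 * n * k * (k - 1) + 1)) := by
        have h1 := Finset.card_image_le (s := s.filter (fun y => y ≠ v ∧ MyAdj f v y)) (f := c)
        have h2 : 2 * (n * k * (k - 1)) < 2 * n * k * (k - 1) + 1 := by
          have : 2 * (n * k * (k - 1)) = 2 * n * k * (k - 1) := by ring
          omega
        simp only [Fintype.card_fin]
        omega
      have hcompl : ((((s.filter (fun y => y ≠ v ∧ MyAdj f v y)).image c))ᶜ).Nonempty := by
        rw [← Finset.card_pos, Finset.card_compl]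
        omega
      obtain ⟨i, hi⟩ := hcompl
      rw [Finset.mem_compl] at hi
      refine ⟨Function.update c v i, ?_⟩
      intro x hx y hy p q hpq hcxy heq
      by_cases hxv : x = v <;> by_cases hyv : y = v
      · subst hxv; subst hyv
        exact hpd _ p q (ne_of_lt hpq) heq
      · subst hxv
        rw [Function.update_self, Function.update_of_ne hyv] at hcxy
        apply hi
        refine Finset.mem_image.2 ⟨y, ?_, hcxy.symm⟩
        exact Finset.mem_filter.2 ⟨hy, hyv, p, q, ne_of_lt hpq, heq⟩
      · subst hyv
        rw [Function.update_self, Function.update_of_ne hxv] at hcxy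
        apply hi
        refine Finset.mem_image.2 ⟨x, ?_, hcxy⟩
        exact Finset.mem_filter.2 ⟨hx, hxv, q, p, (ne_of_lt hpq).symm, heq.symm⟩
      · rw [Function.update_of_ne hxv, Function.update_of_ne hyv] at hcxy
        exact hc x (Finset.mem_erase.2 ⟨hxv, hx⟩) y (Finset.mem_erase.2 ⟨hyv, hy⟩) p q hpq hcxy heq

end aux2



/-- Pairwise `n`-boundedness implies bounded partition: if `f 1, …, f k : E → F`
are pointwise distinct and for every `z ∈ F` and every pair `p ≠ q` we have
`min(|f p ⁻¹ {z}|, |f q ⁻¹ {z}|) ≤ n`, then `E` can be partitioned into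
`2nk(k-1)+1` parts `E_i` with `f p (E_i) ∩ f q (E_i) = ∅` for every `i` and
every `p < q`. -/
theorem stmt6 {E F : Type*} (k n : ℕ) (f : Fin k → E → F)
    (hpd : ∀ x : E, ∀ p q : Fin k, p ≠ q → f p x ≠ f q x)
    (hbd : ∀ z : F, ∀ p q : Fin k, p ≠ q →
      min ({x : E | f p x = z}).encard ({x : E | f q x = z}).encard ≤ n) :
    ∃ c : E → Fin (2 * n * k * (k - 1) + 1),
      ∀ (i : Fin (2 * n * k * (k - 1) + 1)) (p q : Fin k), p < q →
        ∀ x y : E, c x = i → c y = i → f p x ≠ f q y := by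
  classical
  choose g hgp using fun s : Finset E => greedy f hpd hbd s
  haveI : Nonempty (Finset E) := ⟨∅⟩
  let U : Ultrafilter (Finset E) := Ultrafilter.of Filter.atTop
  have hU : (U : Filter (Finset E)) ≤ Filter.atTop := Ultrafilter.of_le _
  have hx : ∀ x : E, ∃ i, {s : Finset E | g s x = i} ∈ U := by
    intro x
    by_contra h
    push_neg at h
    have hcompl : ∀ i : Fin (2 * n * k * (k - 1) + 1), {s : Finset E | g s x = i}ᶜ ∈ U :=
      fun i => Ultrafilter.compl_mem_iff_notMem.2 (h i)
    have hinter : (⋂ i : Fin (2 * n * k * (k - 1) + 1), {s : Finset E | g s x = i}ᶜ)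
        ∈ (U : Filter (Finset E)) := Filter.iInter_mem.2 hcompl
    obtain ⟨s, hsmem⟩ := Filter.nonempty_of_mem hinter
    exact (Set.mem_iInter.1 hsmem (g s x)) rfl
  choose c hc using hx
  refine ⟨c, ?_⟩
  intro i p q hpq x y hcx hcy heq
  have h1 : {s : Finset E | g s x = c x} ∈ U := hc x
  have h2 : {s : Finset E | g s y = c y} ∈ U := hc y
  have h3 : {s : Finset E | ({x, y} : Finset E) ≤ s} ∈ U := hU (Filter.mem_atTop _)
  obtain ⟨s, ⟨hs1, hs2⟩, hs3⟩ :=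
    Filter.nonempty_of_mem (Filter.inter_mem (Filter.inter_mem h1 h2) h3)
  have hxs : x ∈ s := hs3 (Finset.mem_insert_self x {y})
  have hys : y ∈ s := hs3 (Finset.mem_insert_of_mem (Finset.mem_singleton_self y))
  have hgeq : g s x = g s y := by
    rw [Set.mem_setOf_eq] at hs1 hs2
    rw [hs1, hs2, hcx, hcy]
  exact hgp s x hxs y hys p q hpq hgeq heq
end

section
/- Uniform n-boundedness: if f_1,…,f_k : E → F are pointwise distinct and every fiber of every f_i has size at most n, then E admits a valid partition into nk(k−1)+1 parts. -/
/-!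
Call distinct points `x, y` in conflict when `f p x = f q y` for some `p ≠ q`; since the `f i` are
pointwise distinct, a partition is valid exactly when no part contains two conflicting points,
i.e. when it is a proper colouring of the conflict graph. The conflict neighbours of `x` lie in
the `k(k-1)` fibres `{y | f q y = f p x}`, each of size at most `n`, and colouring `E` greedily
along a well-ordering needs at most one colour more than this degree bound.
-/

open Set

theorem Set.exists_notMem_range_of_enatCard_lt {ι α : Type*} (g : ι → α)
    (h : ENat.card ι < ENat.card α) : ∃ a, a ∉ range g := by
  by_contra! hg
  have : ENat.card α ≤ ENat.card ι := by
    rw [← encard_univ, ← eq_univ_of_forall hg, ← image_univ, ← encard_univ]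
    exact encard_image_le g univ
  exact (h.trans_le this).false

namespace SimpleGraph

variable {V α : Type*} {G : SimpleGraph V}

theorem nonempty_coloring_of_encard_neighborSet_lt
    (h : ∀ v, (G.neighborSet v).encard < ENat.card α) : Nonempty (G.Coloring α) := by
  let r : V → V → Prop := WellOrderingRel
  have freeColor (v : V) (prev : ∀ w, r w v → α) :
      ∃ a, a ∉ range fun w : {w // G.Adj v w ∧ r w v} ↦ prev w w.2.2 :=
    exists_notMem_range_of_enatCard_lt _ <| lt_of_le_of_lt
      (encard_le_encard fun w hw ↦ hw.1 : {w | G.Adj v w ∧ r w v}.encard ≤ _) (h v)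
  let c : V → α := IsWellFounded.fix r fun v prev ↦ (freeColor v prev).choose
  have hc (v w : V) (hvw : G.Adj v w) (hr : r w v) : c v ≠ c w := by
    intro hcw
    refine (freeColor v fun w _ ↦ c w).choose_spec ⟨⟨w, hvw, hr⟩, ?_⟩
    rw [show c v = _ from IsWellFounded.fix_eq r _ v] at hcw
    exact hcw.symm
  refine ⟨Coloring.mk c fun {v w} hvw ↦ ?_⟩
  rcases trichotomous_of r v w with hr | rfl | hr
  · exact (hc w v hvw.symm hr).symm
  · exact (hvw.ne rfl).elim
  · exact hc v w hvw hr

theorem colorable_of_encard_neighborSet_le {d : ℕ} (h : ∀ v, (G.neighborSet v).encard ≤ d) :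
    G.Colorable (d + 1) :=
  nonempty_coloring_of_encard_neighborSet_lt fun v ↦ by
    simpa [ENat.card_eq_coe_fintype_card] using
      (h v).trans_lt (ENat.natCast_lt_natCast.2 d.lt_succ_self)

end SimpleGraph

section ConflictGraph

variable {ι E F : Type*}

def conflictGraph (f : ι → E → F) : SimpleGraph E where
  Adj x y := x ≠ y ∧ ∃ p q, p ≠ q ∧ f p x = f q y
  symm := ⟨fun _ _ ⟨hxy, p, q, hpq, h⟩ ↦ ⟨hxy.symm, q, p, hpq.symm, h.symm⟩⟩
  loopless := ⟨fun _ h ↦ h.1 rfl⟩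

theorem conflictGraph_adj {f : ι → E → F} {x y : E} :
    (conflictGraph f).Adj x y ↔ x ≠ y ∧ ∃ p q, p ≠ q ∧ f p x = f q y :=
  Iff.rfl

theorem encard_neighborSet_conflictGraph_le [Fintype ι] {f : ι → E → F} {n : ℕ}
    (hbd : ∀ i z, {x | f i x = z}.encard ≤ n) (x : E) :
    ((conflictGraph f).neighborSet x).encard ≤ n * Fintype.card ι * (Fintype.card ι - 1) := by
  classical
  have hsub : (conflictGraph f).neighborSet x ⊆ ⋃ p, ⋃ q : {q // q ≠ p}, {y | f q y = f p x} :=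
    fun y hy ↦ by
      obtain ⟨-, p, q, hpq, h⟩ := conflictGraph_adj.1 hy
      exact mem_iUnion₂.2 ⟨p, ⟨q, hpq.symm⟩, h.symm⟩
  calc ((conflictGraph f).neighborSet x).encard
      ≤ ∑ p, ∑ q : {q // q ≠ p}, {y | f q y = f p x}.encard :=
        (encard_le_encard hsub).trans <| (encard_iUnion_le_of_fintype _).trans <|
          Finset.sum_le_sum fun p _ ↦ encard_iUnion_le_of_fintype _
    _ ≤ ∑ p : ι, ∑ q : {q // q ≠ p}, (n : ℕ∞) := by gcongr with p _ q; exact hbd _ _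
    _ = n * Fintype.card ι * (Fintype.card ι - 1) := by
        simp only [Finset.sum_const, Finset.card_univ, Fintype.card_subtype_compl,
          Fintype.card_unique, nsmul_eq_mul]
        push_cast
        ring

end ConflictGraph

/-- Uniform `n`-boundedness: if `f 1, …, f k : E → F` are pointwise distinct and
every fiber of every `f i` has size at most `n`, then `E` admits a valid
partition into `nk(k-1)+1` parts, i.e. a partition into parts `E_i` with
`f p (E_i) ∩ f q (E_i) = ∅` for all `i` and all `p < q`. -/
theorem stmt7 {E F : Type*} (k n : ℕ) (f : Fin k → E → F)
    (hpd : ∀ x : E, ∀ p q : Fin k, p ≠ q → f p x ≠ f q x)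
    (hbd : ∀ (i : Fin k) (z : F), ({x : E | f i x = z}).encard ≤ n) :
    ∃ c : E → Fin (n * k * (k - 1) + 1),
      ∀ (i : Fin (n * k * (k - 1) + 1)) (p q : Fin k), p < q →
        ∀ x y : E, c x = i → c y = i → f p x ≠ f q y := by
  obtain ⟨c⟩ : (conflictGraph f).Colorable (n * k * (k - 1) + 1) :=
    SimpleGraph.colorable_of_encard_neighborSet_le fun x ↦ by
      simpa using encard_neighborSet_conflictGraph_le hbd x
  refine ⟨c, fun i p q hpq x y hx hy hxy ↦ ?_⟩
  obtain rfl | hne := eq_or_ne x y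
  · exact hpd x p q hpq.ne hxy
  · exact c.valid (conflictGraph_adj.2 ⟨hne, p, q, hpq.ne, hxy⟩) (hx.trans hy.symm)
end

section
/- Lower bound construction: for E = F = Z/(2k−1) and f_i(x) = x + i for i = 1,…,k, the conflict graph is the complete graph K_{2k−1}; hence every valid partition requires at least 2k−1 parts, even though all fibers have size 1. -/
theorem Set.encard_setOf_add_eq {G : Type*} [AddGroup G] (a z : G) :
    {x : G | x + a = z}.encard = 1 := by
  rw [Set.encard_eq_one]
  exact ⟨z - a, Set.ext fun x => by simp [eq_sub_iff_add_eq]⟩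

/-- A residue with `val ≥ k` is represented by `val - n ∈ (-k, 0)`, since `n ≤ 2k - 1`. -/
theorem ZMod.exists_ne_natCast_sub_natCast {n k : ℕ} [NeZero n] (hn : n ≤ 2 * k - 1)
    {d : ZMod n} (hd : d ≠ 0) :
    ∃ p q : Fin k, p ≠ q ∧ ((p : ℕ) : ZMod n) - (q : ℕ) = d := by
  have hv_pos : 0 < d.val := Nat.pos_of_ne_zero ((ZMod.val_ne_zero d).mpr hd)
  have hv_lt : d.val < n := ZMod.val_lt d
  by_cases hsmall : d.val < k
  · refine ⟨⟨d.val, hsmall⟩, ⟨0, by omega⟩, Fin.ne_of_val_ne (by dsimp only; omega), ?_⟩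
    simp
  · refine ⟨⟨0, by omega⟩, ⟨n - d.val, by omega⟩, Fin.ne_of_val_ne (by dsimp only; omega), ?_⟩
    simp [Nat.cast_sub hv_lt.le]

theorem Function.injective_of_conflict {ι α β γ : Type*} [LinearOrder ι]
    {f : ι → α → β} {c : α → γ}
    (hconflict : ∀ x y, x ≠ y → ∃ p q, p ≠ q ∧ f p x = f q y)
    (hvalid : ∀ p q, p < q → ∀ x y, c x = c y → f p x ≠ f q y) :
    Function.Injective c := by
  intro x y hxy
  by_contra hne
  obtain ⟨p, q, hpq, hfpq⟩ := hconflict x y hne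
  rcases hpq.lt_or_gt with h | h
  · exact hvalid p q h x y hxy hfpq
  · exact hvalid q p h y x hxy.symm hfpq.symm

/-- Lower bound construction: for `E = F = ℤ/(2k-1)` (`k ≥ 2`) and
`f i (x) = x + i` for `i = 1, …, k` (encoded as `f i x = x + (i+1)` for
`i : Fin k`), all fibers have size 1, the conflict graph is complete (any two
distinct `x, y` satisfy `f p x = f q y` for some `p ≠ q`), and hence every
valid partition requires at least `2k - 1` parts. -/
theorem stmt8 (k : ℕ) (hk : 2 ≤ k)
    (f : Fin k → ZMod (2 * k - 1) → ZMod (2 * k - 1))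
    (hf : ∀ (i : Fin k) (x : ZMod (2 * k - 1)), f i x = x + ((i : ℕ) + 1 : ℕ)) :
    (∀ (i : Fin k) (z : ZMod (2 * k - 1)),
        ({x : ZMod (2 * k - 1) | f i x = z}).encard = 1) ∧
    (∀ x y : ZMod (2 * k - 1), x ≠ y → ∃ p q : Fin k, p ≠ q ∧ f p x = f q y) ∧
    (∀ (m : ℕ) (c : ZMod (2 * k - 1) → Fin m),
      (∀ (i : Fin m) (p q : Fin k), p < q →
        ∀ x y : ZMod (2 * k - 1), c x = i → c y = i → f p x ≠ f q y) →
      2 * k - 1 ≤ m) := by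
  have : NeZero (2 * k - 1) := ⟨by omega⟩
  have hconflict : ∀ x y : ZMod (2 * k - 1), x ≠ y → ∃ p q : Fin k, p ≠ q ∧ f p x = f q y := by
    intro x y hxy
    obtain ⟨p, q, hpq, hsub⟩ := ZMod.exists_ne_natCast_sub_natCast le_rfl (sub_ne_zero.mpr hxy.symm)
    refine ⟨p, q, hpq, ?_⟩
    rw [hf, hf]
    push_cast
    linear_combination hsub
  refine ⟨fun i z => by simpa only [hf] using Set.encard_setOf_add_eq _ z, hconflict, ?_⟩
  intro m c hc
  have hinj : Function.Injective c :=
    Function.injective_of_conflict hconflict fun p q hpq x y hxy => hc _ p q hpq x y hxy rfl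
  simpa [ZMod.card] using Fintype.card_le_of_injective c hinj
end

section
/- If G has a universal vertex z and x is a feasible KKOS distribution with x_z > 0, then the support of x induces a clique in G. -/
open Finset

/-- `(Ax)_v` where `A` is the adjacency matrix plus the identity:
the total weight in the closed neighborhood of `v`. -/
noncomputable def kkosMass {V : Type*} [Fintype V] [DecidableEq V]
    (G : SimpleGraph V) [DecidableRel G.Adj] (x : V → ℝ) (v : V) : ℝ :=
  ∑ u, if u = v ∨ G.Adj v u then x u else 0

/-- If `G` has a universal vertex `z` and `x` is a feasible KKOS distribution
with `x z > 0`, then the support of `x` induces a clique in `G`. -/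
theorem stmt9 {V : Type*} [Fintype V] [DecidableEq V]
    (G : SimpleGraph V) [DecidableRel G.Adj]
    (z : V) (huniv : ∀ v : V, v ≠ z → G.Adj z v)
    (x : V → ℝ) (hx0 : ∀ v, 0 ≤ x v) (hx1 : ∑ v, x v = 1)
    (hfeas : ∀ u v : V, G.Adj u v → 0 < x u → 0 < x v →
      kkosMass G x u = kkosMass G x v)
    (hz : 0 < x z) :
    ∀ u v : V, 0 < x u → 0 < x v → u ≠ v → G.Adj u v := by
  have hmassz : kkosMass G x z = 1 := by
    unfold kkosMass
    rw [← hx1]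
    apply Finset.sum_congr rfl
    intro w _
    rcases eq_or_ne w z with h | h
    · simp [h]
    · simp [huniv w h]
  -- key: if x u > 0 then kkosMass u = 1
  have hmass : ∀ u : V, 0 < x u → kkosMass G x u = 1 := by
    intro u hu
    rcases eq_or_ne u z with rfl | h
    · exact hmassz
    · rw [← hfeas z u (huniv u h) hz hu]; exact hmassz
  -- key: if mass u = 1 and x v > 0 then v = u or Adj u v
  have hkey : ∀ u v : V, 0 < x u → 0 < x v → v = u ∨ G.Adj u v := by
    intro u v hu hv
    have h0 : ∑ w, (x w - if w = u ∨ G.Adj u w then x w else 0) = 0 := by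
      rw [Finset.sum_sub_distrib, hx1]
      have := hmass u hu
      unfold kkosMass at this
      rw [this]; ring
    have hnn : ∀ w ∈ Finset.univ,
        0 ≤ x w - if w = u ∨ G.Adj u w then x w else 0 := by
      intro w _
      split
      · simp
      · simpa using hx0 w
    have := (Finset.sum_eq_zero_iff_of_nonneg hnn).mp h0 v (Finset.mem_univ v)
    by_contra hc
    rw [if_neg hc] at this
    simp at this
    exact absurd this (by linarith)
  intro u v hu hv huv
  rcases hkey u v hu hv with rfl | h
  · exact absurd rfl huv.symm
  · exact h
end

section
/- Dominated neighborhood obstruction: if a graph H has an edge uv with closed neighborhood N[u] strictly contained in N[v], then no strictly positive vector x on V(H) satisfies (Ax)_a = (Ax)_b for every edge ab of H, where A is the adjacency matrix plus identity. -/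
open Finset

/-- Dominated neighborhood obstruction: if a graph `H` has an edge `uv` with
closed neighborhood `N[u]` strictly contained in `N[v]`, then no strictly
positive vector `x` satisfies `(Ax)_a = (Ax)_b` for every edge `ab`. -/
theorem stmt11 {V : Type*} [Fintype V] [DecidableEq V]
    (H : SimpleGraph V) [DecidableRel H.Adj] (u v : V) (huv : H.Adj u v)
    (hsub : ∀ w : V, (w = u ∨ H.Adj u w) → (w = v ∨ H.Adj v w))
    (hstrict : ∃ w : V, (w = v ∨ H.Adj v w) ∧ ¬(w = u ∨ H.Adj u w))
    (x : V → ℝ) (hx : ∀ w, 0 < x w) :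
    ¬ (∀ a b : V, H.Adj a b → kkosMass H x a = kkosMass H x b) := by
  intro h
  have heq := h u v huv
  have hlt : kkosMass H x u < kkosMass H x v := by
    unfold kkosMass
    obtain ⟨w, hw, hnw⟩ := hstrict
    apply Finset.sum_lt_sum
    · intro i _
      by_cases hi : i = u ∨ H.Adj u i
      · simp [hi, hsub i hi]
      · simp only [hi, if_false]
        split <;> [exact (hx i).le; exact le_refl 0]
    · exact ⟨w, Finset.mem_univ w, by simp [hw, hnw, hx w]⟩
  exact absurd heq hlt.ne
end

section
/- In a chordal graph, every connected component of the subgraph induced by a feasible support is a clique. -/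
/-!
In the subgraph induced by the support `S`, chordality provides, in the component of `u`, a
vertex `σ` whose neighbourhood in `S` is a clique. For a neighbour `y` of `σ` in `S` this gives
`N[σ] ∩ S ⊆ N[y] ∩ S`; as `x` is positive exactly on `S`, the feasibility equation
`(Ax)_σ = (Ax)_y` forces equality. Hence `N[σ] ∩ S` is closed under adjacency inside `S`, so it
contains the whole component, and it is a clique.

The vertex `σ` comes from Dirac's separator argument, relative to a vertex set `U`: if `w ∈ U` is
not adjacent to `v ∈ U`, the boundary of the component of `w` in `U \ N[v]` is a clique, because
two non-adjacent boundary vertices, joined once through the component and once through `v`, would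
lie on a chordless cycle of length at least 4. Recursing on the component plus its boundary,
which misses `v`, gives a simplicial vertex inside the component.
-/

open Finset

namespace SimpleGraph

variable {V : Type*} {G : SimpleGraph V}

namespace Walk

variable {u v : V}

theorem exists_length_lt_support_subset_of_not_isChordless {p : G.Walk u v}
    (hp : ¬p.IsChordless) : ∃ q : G.Walk u v, q.length < p.length ∧ q.support ⊆ p.support := by
  simp only [isChordless_iff_forall_mem_edges, not_forall] at hp
  obtain ⟨a, b, ha, hb, hab, hne⟩ := hp
  obtain ⟨i, rfl, hi⟩ := mem_support_iff_exists_getVert.mp ha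
  obtain ⟨j, rfl, hj⟩ := mem_support_iff_exists_getVert.mp hb
  clear ha hb
  wlog hij : i < j generalizing i j
  · have hji : j < i := (not_lt.mp hij).lt_of_ne fun h => hab.ne (h ▸ rfl)
    exact this j hj i hi hab.symm (by rwa [Sym2.eq_swap]) hji
  have hsucc : i + 1 ≠ j := by
    rintro rfl
    exact hne ((mk_mem_edges_iff_exists p).2 ⟨i, by omega, rfl⟩)
  refine ⟨(p.take i).append (cons hab (p.drop j)), ?_, ?_⟩
  · simp only [length_append, take_length, length_cons, drop_length]
    omega
  · intro z hz
    simp only [support_append, support_take, support_cons, List.tail_cons,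
      drop_support_eq_support_drop_min, List.mem_append] at hz
    exact hz.elim List.mem_of_mem_take List.mem_of_mem_drop

theorem exists_isPath_isChordless_support_subset (p : G.Walk u v) :
    ∃ q : G.Walk u v, q.IsPath ∧ q.IsChordless ∧ q.support ⊆ p.support := by
  classical
  induction hn : p.length using Nat.strong_induction_on generalizing p with
  | _ n ih =>
  by_cases hbypass : p.bypass.length < p.length
  · obtain ⟨q, hq, hq', hsub⟩ := ih _ (hn ▸ hbypass) p.bypass rfl
    exact ⟨q, hq, hq', List.Subset.trans hsub p.support_bypass_subset_support⟩
  have hpath : p.IsPath :=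
    p.bypass_eq_self_of_length_le_length_bypass (not_lt.mp hbypass) ▸ p.bypass_isPath
  by_cases hchord : p.IsChordless
  · exact ⟨p, hpath, hchord, List.Subset.refl _⟩
  obtain ⟨r, hr, hsub⟩ := exists_length_lt_support_subset_of_not_isChordless hchord
  obtain ⟨q, hq, hq', hsub'⟩ := ih _ (hn ▸ hr) r rfl
  exact ⟨q, hq, hq', List.Subset.trans hsub' hsub⟩

end Walk

def IsChordal (G : SimpleGraph V) : Prop :=
  ∀ (v : V) (w : G.Walk v v), w.IsCycle → 4 ≤ w.length →
    ∃ a b : V, a ∈ w.support ∧ b ∈ w.support ∧ G.Adj a b ∧ s(a, b) ∉ w.edges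

theorem IsChordal.adj_of_walk (hG : G.IsChordal) {v s t : V} (hvs : G.Adj v s)
    (hvt : G.Adj v t) (hst : s ≠ t) (p : G.Walk s t) (hvp : v ∉ p.support)
    (hp : ∀ z ∈ p.support, G.Adj v z → z = s ∨ z = t) : G.Adj s t := by
  by_contra hnadj
  obtain ⟨q, hq, hqc, hsub⟩ := p.exists_isPath_isChordless_support_subset
  have hvq : v ∉ q.support := fun h => hvp (hsub h)
  have hlen : 2 ≤ q.length := by
    by_contra! h
    interval_cases hl : q.length
    · exact hst (Walk.eq_of_length_eq_zero hl)
    · exact hnadj (Walk.adj_of_length_eq_one hl)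
  set c : G.Walk v v := .cons hvs (q.concat hvt.symm)
  have hcyc : c.IsCycle := by
    refine (Walk.cons_isCycle_iff _ hvs).2 ⟨hq.concat hvq _, fun he => ?_⟩
    rw [Walk.edges_concat, List.concat_eq_append, List.mem_append, List.mem_singleton] at he
    rcases he with he | he
    · exact hvq (q.fst_mem_support_of_mem_edges he)
    · rcases Sym2.eq_iff.1 he with ⟨rfl, -⟩ | ⟨-, rfl⟩
      · exact hvt.ne rfl
      · exact hst rfl
  have hv_edges : ∀ z ∈ q.support, G.Adj v z → s(v, z) ∈ c.edges := by
    intro z hz hvz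
    rcases hp z (hsub hz) hvz with rfl | rfl <;> simp [c, Sym2.eq_swap]
  obtain ⟨a, b, ha, hb, hab, hne⟩ := hG v c hcyc (by simp only [c, Walk.length_cons, Walk.length_concat]; omega)
  have hmem : ∀ z ∈ c.support, z = v ∨ z ∈ q.support := by
    intro z hz
    simp only [c, Walk.support_cons, Walk.support_concat, List.mem_cons, List.mem_append,
      List.not_mem_nil, or_false] at hz
    tauto
  rcases hmem a ha with rfl | haq <;> rcases hmem b hb with rfl | hbq
  · exact hab.ne rfl
  · exact hne (hv_edges b hbq hab)
  · exact hne (Sym2.eq_swap ▸ hv_edges a haq hab.symm)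
  · exact hne (by simpa [c] using Or.inr (Or.inl (hqc.mem_edges haq hbq hab)))

/-- Reachability in `G.induce U`, stated on `V` so that `U` can shrink without changing the
vertex type. -/
def ReachableIn (G : SimpleGraph V) (U : Set V) (a b : V) : Prop :=
  ∃ p : G.Walk a b, ∀ z ∈ p.support, z ∈ U

namespace ReachableIn

variable {U U' : Set V} {a b c : V}

theorem refl (ha : a ∈ U) : G.ReachableIn U a a :=
  ⟨.nil, by simpa using ha⟩

theorem symm (h : G.ReachableIn U a b) : G.ReachableIn U b a := by
  obtain ⟨p, hp⟩ := h
  exact ⟨p.reverse, by simpa using hp⟩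

theorem trans (h : G.ReachableIn U a b) (h' : G.ReachableIn U b c) : G.ReachableIn U a c := by
  obtain ⟨p, hp⟩ := h
  obtain ⟨q, hq⟩ := h'
  exact ⟨p.append q, fun z hz => (Walk.mem_support_append_iff p q).1 hz |>.elim (hp z) (hq z)⟩

theorem mono (h : G.ReachableIn U a b) (hU : U ⊆ U') : G.ReachableIn U' a b := by
  obtain ⟨p, hp⟩ := h
  exact ⟨p, fun z hz => hU (hp z hz)⟩

theorem mem_left (h : G.ReachableIn U a b) : a ∈ U := by
  obtain ⟨p, hp⟩ := h
  exact hp a p.start_mem_support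

theorem mem_right (h : G.ReachableIn U a b) : b ∈ U :=
  h.symm.mem_left

theorem step (h : G.ReachableIn U a b) (hbc : G.Adj b c) (hc : c ∈ U) : G.ReachableIn U a c :=
  h.trans ⟨hbc.toWalk, by simp [h.mem_right, hc]⟩

theorem mem_of_forall_adj {N : Set V} (hN : ∀ y ∈ N, ∀ z ∈ U, G.Adj y z → z ∈ N)
    (ha : a ∈ N) (h : G.ReachableIn U a b) : b ∈ N := by
  obtain ⟨p, hp⟩ := h
  induction p with
  | nil => exact ha
  | cons hadj p ih =>
    simp only [Walk.support_cons, List.mem_cons, forall_eq_or_imp] at hp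
    exact ih (hN _ ha _ (hp.2 _ p.start_mem_support) hadj) hp.2

theorem of_induce_reachable {a b : U} (h : (G.induce U).Reachable a b) :
    G.ReachableIn U a b := by
  obtain ⟨p⟩ := h
  have hsupp := Walk.support_map (Embedding.induce U).toHom p
  refine ⟨p.map (Embedding.induce U).toHom, fun z hz => ?_⟩
  obtain ⟨z, -, rfl⟩ := List.mem_map.1 (hsupp ▸ hz)
  exact z.2

end ReachableIn

theorem IsChordal.adj_of_reachableIn_compl (hG : G.IsChordal) {v s t c c' : V}
    (hvs : G.Adj v s) (hvt : G.Adj v t) (hst : s ≠ t) (hsc : G.Adj s c) (hc't : G.Adj c' t)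
    (h : G.ReachableIn (insert v (G.neighborSet v))ᶜ c c') : G.Adj s t := by
  obtain ⟨r, hr⟩ := h
  have hr' : ∀ z ∈ r.support, z ≠ v ∧ ¬G.Adj v z := fun z hz => by simpa using hr z hz
  refine hG.adj_of_walk hvs hvt hst (.cons hsc (r.concat hc't)) ?_ ?_
  · simp only [Walk.support_cons, Walk.support_concat, List.mem_cons, List.mem_append,
      List.not_mem_nil, or_false, not_or]
    exact ⟨hvs.ne, fun hv => (hr' v hv).1 rfl, hvt.ne⟩
  · intro z hz hvz
    simp only [Walk.support_cons, Walk.support_concat, List.mem_cons, List.mem_append,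
      List.not_mem_nil, or_false] at hz
    rcases hz with hz | hz | hz
    · exact Or.inl hz
    · exact absurd hvz (hr' z hz).2
    · exact Or.inr hz

theorem exists_not_adj_sdiff_subset_of_isClique_sdiff {C U : Set V} (hC : G.IsClique (U \ C))
    (hU : ¬G.IsClique U) :
    ∃ a ∈ U, ∃ b ∈ U, a ≠ b ∧ ¬G.Adj a b ∧ U \ insert a (G.neighborSet a) ⊆ C := by
  -- A vertex outside `C` with a non-neighbour in `U` works; otherwise the vertices outside `C`
  -- are adjacent to all of `U` and any non-adjacent pair does.
  by_cases hk : ∃ k ∈ U, k ∉ C ∧ ∃ c ∈ U, k ≠ c ∧ ¬G.Adj k c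
  · obtain ⟨k, hkU, hkC, c, hcU, hkc, hnkc⟩ := hk
    refine ⟨k, hkU, c, hcU, hkc, hnkc, fun z hz => ?_⟩
    by_contra hzC
    exact hz.2 (Or.inr (hC ⟨hkU, hkC⟩ ⟨hz.1, hzC⟩ fun h => hz.2 (Or.inl h.symm)))
  · push Not at hk
    obtain ⟨a, haU, b, hbU, hab, hnab⟩ : ∃ a ∈ U, ∃ b ∈ U, a ≠ b ∧ ¬G.Adj a b := by
      simpa [IsClique, Set.Pairwise] using hU
    refine ⟨a, haU, b, hbU, hab, hnab, fun z hz => ?_⟩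
    by_contra hzC
    exact hz.2 (Or.inr (hk z hz.1 hzC a haU fun h => hz.2 (Or.inl h)).symm)

theorem IsChordal.exists_isClique_reachableIn_diff [Finite V] (hG : G.IsChordal) {U : Set V}
    {v w : V} (hv : v ∈ U) (hw : w ∈ U) (hvw : v ≠ w) (hnadj : ¬G.Adj v w) :
    ∃ σ, G.IsClique (G.neighborSet σ ∩ U) ∧
      G.ReachableIn (U \ insert v (G.neighborSet v)) w σ := by
  induction hn : U.ncard using Nat.strong_induction_on generalizing U v w with
  | _ n ih =>
  set W := U \ insert v (G.neighborSet v)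
  set C := {z | G.ReachableIn W w z}
  set U' := {z ∈ U | ∃ c ∈ C, c = z ∨ G.Adj c z}
  have hCW : C ⊆ W := fun z hz => ReachableIn.mem_right hz
  have hwC : w ∈ C := ReachableIn.refl (by simp [W, hw, hvw.symm, hnadj])
  have hvU' : v ∉ U' := by
    rintro ⟨-, c, hc, hcv⟩
    have := hCW hc
    simp only [W, Set.mem_sdiff, Set.mem_insert_iff, mem_neighborSet, not_or] at this
    exact hcv.elim this.2.1 fun h => this.2.2 h.symm
  have hbdry : ∀ k ∈ U', k ∉ C → G.Adj v k := by
    rintro k ⟨hkU, c, hc, rfl | hck⟩ hkC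
    · exact absurd hc hkC
    by_contra hvk
    have hkv : k ≠ v := by
      rintro rfl
      exact (hCW hc).2 (Or.inr hck.symm)
    exact hkC (ReachableIn.step hc hck ⟨hkU, by simp [hkv, hvk]⟩)
  have hbdry_clique : G.IsClique (U' \ C) := by
    rintro k ⟨hk, hkC⟩ k' ⟨hk', hk'C⟩ hkk'
    obtain ⟨c, hc, rfl | hck⟩ := hk.2
    · contradiction
    obtain ⟨c', hc', rfl | hck'⟩ := hk'.2
    · contradiction
    exact hG.adj_of_reachableIn_compl (hbdry k hk hkC) (hbdry k' hk' hk'C) hkk' hck.symm hck'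
      ((ReachableIn.symm hc).trans hc' |>.mono (Set.sdiff_subset_compl _ _))
  have hlift : ∀ σ ∈ C, G.IsClique (G.neighborSet σ ∩ U') → G.IsClique (G.neighborSet σ ∩ U) :=
    fun σ hσ hclique => hclique.subset fun z hz =>
      (⟨hz.1, hz.2, σ, hσ, Or.inr hz.1⟩ : z ∈ G.neighborSet σ ∩ U')
  have hlt : U'.ncard < n := hn ▸ Set.ncard_lt_ncard
    ((Set.ssubset_iff_of_subset fun z hz => hz.1).2 ⟨v, hv, hvU'⟩)
  by_cases hU'clique : G.IsClique U'
  · exact ⟨w, hlift w hwC (hU'clique.subset Set.inter_subset_right), .refl (hCW hwC)⟩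
  obtain ⟨a, haU', b, hbU', hab, hnab, hsub⟩ :=
    exists_not_adj_sdiff_subset_of_isClique_sdiff hbdry_clique hU'clique
  obtain ⟨σ, hσ, hbσ⟩ := ih _ hlt haU' hbU' hab hnab rfl
  have hbC : b ∈ C := hsub hbσ.mem_left
  have hσC : σ ∈ C := ReachableIn.trans hbC ((hbσ.mono hsub).mono hCW)
  exact ⟨σ, hlift σ hσC hσ, hσC⟩

theorem IsChordal.exists_isClique_reachableIn [Finite V] (hG : G.IsChordal) {U : Set V} {u : V}
    (hu : u ∈ U) : ∃ σ, G.IsClique (G.neighborSet σ ∩ U) ∧ G.ReachableIn U u σ := by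
  by_cases h : ∃ a b, G.ReachableIn U u a ∧ G.ReachableIn U u b ∧ a ≠ b ∧ ¬G.Adj a b
  · obtain ⟨a, b, ha, hb, hab, hnab⟩ := h
    obtain ⟨σ, hσ, hbσ⟩ := hG.exists_isClique_reachableIn_diff ha.mem_right hb.mem_right hab hnab
    exact ⟨σ, hσ, hb.trans (hbσ.mono Set.sdiff_subset)⟩
  · push Not at h
    refine ⟨u, fun a ha b hb hab => h a b ?_ ?_ hab, .refl hu⟩
    · exact (ReachableIn.refl hu).step ha.1 ha.2
    · exact (ReachableIn.refl hu).step hb.1 hb.2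

end SimpleGraph

theorem kkosMass_lt_kkosMass {V : Type*} [Fintype V] [DecidableEq V] {G : SimpleGraph V}
    [DecidableRel G.Adj] {x : V → ℝ} (hx : ∀ v, 0 ≤ x v) {p q z : V}
    (hpq : ∀ y, 0 < x y → (y = p ∨ G.Adj p y) → y = q ∨ G.Adj q y)
    (hz : 0 < x z) (hzq : z = q ∨ G.Adj q z) (hzp : ¬(z = p ∨ G.Adj p z)) :
    kkosMass G x p < kkosMass G x q := by
  refine Finset.sum_lt_sum (fun y _ => ?_) ⟨z, Finset.mem_univ z, by simpa [hzq, hzp] using hz⟩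
  split_ifs with hp hq
  · exact le_rfl
  · exact not_lt.1 fun hy => hq (hpq y hy hp)
  · exact hx y
  · exact le_rfl

theorem eq_or_adj_of_kkosMass_eq {V : Type*} [Fintype V] [DecidableEq V] {G : SimpleGraph V}
    [DecidableRel G.Adj] {S : Set V} {x : V → ℝ} (hx : ∀ v, 0 ≤ x v)
    (hsupp : ∀ v, 0 < x v ↔ v ∈ S) {σ y z : V} (hσ : G.IsClique (G.neighborSet σ ∩ S))
    (hσy : G.Adj σ y) (hyS : y ∈ S) (hyz : G.Adj y z) (hzS : z ∈ S)
    (hmass : kkosMass G x σ = kkosMass G x y) : z = σ ∨ G.Adj σ z := by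
  by_contra hz
  refine hmass.not_lt
    (kkosMass_lt_kkosMass hx (fun z' hz' hσz' => ?_) ((hsupp z).2 hzS) (Or.inr hyz) hz)
  rcases hσz' with rfl | hσz'
  · exact Or.inr hσy.symm
  by_cases hz'y : z' = y
  · exact Or.inl hz'y
  · exact Or.inr (hσ ⟨hσy, hyS⟩ ⟨hσz', (hsupp z').1 hz'⟩ (Ne.symm hz'y))

open SimpleGraph

theorem stmt13_general {V : Type*} [Fintype V] [DecidableEq V]
    (G : SimpleGraph V) [DecidableRel G.Adj]
    (hchordal : ∀ (v : V) (w : G.Walk v v), w.IsCycle → 4 ≤ w.length →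
      ∃ a b : V, a ∈ w.support ∧ b ∈ w.support ∧ G.Adj a b ∧ s(a, b) ∉ w.edges)
    (S : Set V) (x : V → ℝ) (hx0 : ∀ v, 0 ≤ x v)
    (hsupp : ∀ v, 0 < x v ↔ v ∈ S)
    (hfeas : ∀ u v : V, G.Adj u v → 0 < x u → 0 < x v →
      kkosMass G x u = kkosMass G x v) :
    ∀ u v : S, (G.induce S).Reachable u v → (u : V) = v ∨ G.Adj u v := by
  intro u v huv
  obtain ⟨σ, hσ, huσ⟩ := IsChordal.exists_isClique_reachableIn hchordal u.2
  set N := insert σ (G.neighborSet σ ∩ S)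
  have hN : G.IsClique N := hσ.insert fun b hb _ => hb.1
  have hclosed : ∀ y ∈ N, ∀ z ∈ S, G.Adj y z → z ∈ N := by
    rintro y (rfl | ⟨hσy, hyS⟩) z hzS hyz
    · exact Or.inr ⟨hyz, hzS⟩
    have hmass := hfeas σ y hσy ((hsupp σ).2 huσ.mem_right) ((hsupp y).2 hyS)
    rcases eq_or_adj_of_kkosMass_eq hx0 hsupp hσ hσy hyS hyz hzS hmass with rfl | hσz
    · exact Set.mem_insert _ _
    · exact Or.inr ⟨hσz, hzS⟩
  have hmem : ∀ z, G.ReachableIn S σ z → z ∈ N :=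
    fun z hz => hz.mem_of_forall_adj hclosed (Set.mem_insert σ _)
  have hu := hmem u huσ.symm
  have hv := hmem v (huσ.symm.trans (ReachableIn.of_induce_reachable huv))
  exact or_iff_not_imp_left.2 (hN hu hv)

/-- In a chordal graph (every cycle of length at least 4 has a chord), every
connected component of the subgraph induced by a feasible support is a
clique. -/
theorem stmt13 {V : Type*} [Fintype V] [DecidableEq V]
    (G : SimpleGraph V) [DecidableRel G.Adj]
    (hchordal : ∀ (v : V) (w : G.Walk v v), w.IsCycle → 4 ≤ w.length →
      ∃ a b : V, a ∈ w.support ∧ b ∈ w.support ∧ G.Adj a b ∧ s(a, b) ∉ w.edges)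
    (S : Set V) (x : V → ℝ) (hx0 : ∀ v, 0 ≤ x v) (hx1 : ∑ v, x v = 1)
    (hsupp : ∀ v, 0 < x v ↔ v ∈ S)
    (hfeas : ∀ u v : V, G.Adj u v → 0 < x u → 0 < x v →
      kkosMass G x u = kkosMass G x v) :
    ∀ u v : S, (G.induce S).Reachable u v → (u : V) = v ∨ G.Adj u v :=
  stmt13_general G hchordal S x hx0 hsupp hfeas
end

section
/- Closed-form fixed-support cost: for nonempty S ⊆ V, the minimum of Σ_i c_i |x_i − y_i| over distributions x supported within S equals Σ_{i∉S} c_i y_i + (1 − y(S))·min_{i∈S} c_i. -/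
open Finset

/-- Closed-form fixed-support cost: for nonempty `S ⊆ V`, the minimum of
`∑ i, c i * |x i − y i|` over distributions `x` supported within `S` equals
`∑ i ∉ S, c i * y i + (1 − y(S)) * min_{i ∈ S} c i`, and this minimum is
attained. -/
theorem stmt14 {V : Type*} [Fintype V] [DecidableEq V]
    (S : Finset V) (hS : S.Nonempty)
    (y c : V → ℝ) (hy0 : ∀ i, 0 ≤ y i) (hy1 : ∑ i, y i = 1) (hc : ∀ i, 0 ≤ c i) :
    IsLeast {t : ℝ | ∃ x : V → ℝ, (∀ i, 0 ≤ x i) ∧ ∑ i, x i = 1 ∧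
        (∀ i ∉ S, x i = 0) ∧ t = ∑ i, c i * |x i - y i|}
      (∑ i ∈ Sᶜ, c i * y i + (1 - ∑ i ∈ S, y i) * S.inf' hS c) := by
  obtain ⟨j, hjS, hjm⟩ := S.exists_mem_eq_inf' hS c
  have hsplit : ∀ f : V → ℝ, ∑ i, f i = ∑ i ∈ S, f i + ∑ i ∈ Sᶜ, f i := fun f =>
    (Finset.sum_add_sum_compl S f).symm
  have hyc : ∑ i ∈ Sᶜ, y i = 1 - ∑ i ∈ S, y i := by
    have := hsplit y; linarith
  have hycnn : (0:ℝ) ≤ ∑ i ∈ Sᶜ, y i := Finset.sum_nonneg fun i _ => hy0 i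
  set E : ℝ := ∑ i ∈ Sᶜ, y i with hE
  constructor
  · refine ⟨fun i => if i = j then y j + E else if i ∈ S then y i else 0, ?_, ?_, ?_, ?_⟩
    · intro i; dsimp only; split_ifs with h1 h2
      · linarith [hy0 j]
      · exact hy0 i
      · exact le_refl 0
    · have hx : ∀ i, (if i = j then y j + E else if i ∈ S then y i else 0)
          = (if i ∈ S then y i else 0) + (if i = j then E else 0) := by
        intro i
        by_cases h : i = j
        · subst h; simp [hjS]
        · simp [h]
      rw [Finset.sum_congr rfl fun i _ => hx i, Finset.sum_add_distrib]
      rw [Finset.sum_ite_mem, Finset.univ_inter, Finset.sum_ite_eq' Finset.univ j (fun _ => E)]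
      simp only [Finset.mem_univ, if_true]
      linarith
    · intro i hi
      have hij : i ≠ j := fun h => hi (h ▸ hjS)
      simp [hij, hi]
    · have hpt : ∀ i, c i * |(if i = j then y j + E else if i ∈ S then y i else 0) - y i|
          = (if i ∈ Sᶜ then c i * y i else 0) + (if i = j then c j * E else 0) := by
        intro i
        by_cases h : i = j
        · subst h
          simp [hjS, abs_of_nonneg hycnn]
        · by_cases h2 : i ∈ S
          · simp [h, h2]
          · have habs : |0 - y i| = y i := by
              rw [zero_sub, abs_neg, abs_of_nonneg (hy0 i)]
            simp [h, h2, habs]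
            exact Or.inl (hy0 i)
      rw [Finset.sum_congr rfl fun i _ => hpt i, Finset.sum_add_distrib]
      rw [Finset.sum_ite_mem, Finset.univ_inter,
        Finset.sum_ite_eq' Finset.univ j (fun _ => c j * E)]
      simp only [Finset.mem_univ, if_true]
      rw [← hjm, hyc]; ring
  · rintro t ⟨x, hx0, hx1, hxS, rfl⟩
    set m : ℝ := S.inf' hS c with hm
    have hmnn : 0 ≤ m := hjm ▸ hc j
    have hxsum : ∑ i ∈ S, x i = 1 := by
      have h0 : ∑ i ∈ Sᶜ, x i = 0 :=
        Finset.sum_eq_zero fun i hi => hxS i (Finset.mem_compl.mp hi)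
      have := hsplit x; linarith
    have hSbound : m * (1 - ∑ i ∈ S, y i) ≤ ∑ i ∈ S, c i * |x i - y i| := by
      calc m * (1 - ∑ i ∈ S, y i) = ∑ i ∈ S, m * (x i - y i) := by
            rw [← Finset.mul_sum, Finset.sum_sub_distrib, hxsum]
        _ ≤ ∑ i ∈ S, c i * |x i - y i| := by
            refine Finset.sum_le_sum fun i hi => ?_
            calc m * (x i - y i) ≤ m * |x i - y i| :=
                  mul_le_mul_of_nonneg_left (le_abs_self _) hmnn
              _ ≤ c i * |x i - y i| :=
                  mul_le_mul_of_nonneg_right (Finset.inf'_le c hi) (abs_nonneg _)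
    have hCbound : ∑ i ∈ Sᶜ, c i * |x i - y i| = ∑ i ∈ Sᶜ, c i * y i := by
      refine Finset.sum_congr rfl fun i hi => ?_
      rw [hxS i (Finset.mem_compl.mp hi),
        abs_of_nonpos (by linarith [hy0 i] : 0 - y i ≤ 0)]
      ring
    have := hsplit fun i => c i * |x i - y i|
    rw [this, hCbound]
    nlinarith [hSbound]
end

section
/- In the game G, if P is an ε-coarse correlated equilibrium, then |E_{a∼P}[a_{(i,j)} a_{(j,i)} χ_{S_{{i,j}}}(a)]| ≤ 2ε for every player (i,j). -/
open Finset

/-- Players of the game: ordered pairs `(i,j)` with `i ≠ j`. -/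
abbrev GPlayer (s : ℕ) := {p : Fin s × Fin s // p.1 ≠ p.2}

/-- Action value: actions are `±1`, encoded by `Bool`. -/
noncomputable def actVal (b : Bool) : ℝ := if b then 1 else -1

/-- The set `S_{{i,j}} = (S_i Δ S_j) \ {(i,j),(j,i)}`, where
`S_i = {(i,j') : j' ≠ i}`; since `i ≠ j`, the symmetric difference
`S_i Δ S_j` consists of players whose first coordinate is `i` or `j`. -/
def Sij (s : ℕ) (i j : Fin s) : Finset (GPlayer s) :=
  Finset.univ.filter (fun p =>
    (p.val.1 = i ∨ p.val.1 = j) ∧ p.val ≠ (i, j) ∧ p.val ≠ (j, i))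

/-- `χ_T(a) = ∏_{p ∈ T} a_p`. -/
noncomputable def chi {s : ℕ} (T : Finset (GPlayer s)) (a : GPlayer s → Bool) : ℝ :=
  ∏ p ∈ T, actVal (a p)

/-- The opposite player `(j,i)` of player `(i,j)`. -/
def oppPl {s : ℕ} (p : GPlayer s) : GPlayer s :=
  ⟨(p.val.2, p.val.1), Ne.symm p.prop⟩

/-- Payoff of player `(i,j)`:
`(1 ± a_{(i,j)} a_{(j,i)} χ_{S_{{i,j}}}(a))/2`, with `+` iff `i < j`. -/
noncomputable def gPayoff {s : ℕ} (p : GPlayer s) (a : GPlayer s → Bool) : ℝ :=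
  if p.val.1 < p.val.2 then
    (1 + actVal (a p) * actVal (a (oppPl p)) * chi (Sij s p.val.1 p.val.2) a) / 2
  else
    (1 - actVal (a p) * actVal (a (oppPl p)) * chi (Sij s p.val.1 p.val.2) a) / 2

lemma chi_update {s : ℕ} (T : Finset (GPlayer s)) (a : GPlayer s → Bool)
    (p : GPlayer s) (b : Bool) (hp : p ∉ T) :
    chi T (Function.update a p b) = chi T a := by
  refine Finset.prod_congr rfl fun q hq => ?_
  have hqp : q ≠ p := by rintro rfl; exact hp hq
  rw [Function.update_of_ne hqp]

lemma self_not_mem_Sij {s : ℕ} (p : GPlayer s) :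
    p ∉ Sij s p.val.1 p.val.2 := by
  simp [Sij]

lemma Sij_symm (s : ℕ) (i j : Fin s) : Sij s j i = Sij s i j := by
  ext q; simp only [Sij, mem_filter, mem_univ, true_and]; tauto

lemma oppPl_ne {s : ℕ} (p : GPlayer s) : oppPl p ≠ p := by
  intro h
  exact p.prop (congrArg (fun q => q.val.2) h)

lemma oppPl_oppPl {s : ℕ} (p : GPlayer s) : oppPl (oppPl p) = p := by
  apply Subtype.ext; rfl

noncomputable def Xv {s : ℕ} (p : GPlayer s) (a : GPlayer s → Bool) : ℝ :=
  actVal (a p) * actVal (a (oppPl p)) * chi (Sij s p.val.1 p.val.2) a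

noncomputable def sgn {s : ℕ} (p : GPlayer s) : ℝ :=
  if p.val.1 < p.val.2 then 1 else -1

lemma diff_sum {s : ℕ} (p : GPlayer s) (a : GPlayer s → Bool) :
    (gPayoff p (Function.update a p true) - gPayoff p a)
      + (gPayoff p (Function.update a p false) - gPayoff p a)
      = -(sgn p) * Xv p a := by
  have hchi : ∀ b, chi (Sij s p.val.1 p.val.2) (Function.update a p b)
      = chi (Sij s p.val.1 p.val.2) a :=
    fun b => chi_update _ a p b (self_not_mem_Sij p)
  have hopp : ∀ b, Function.update a p b (oppPl p) = a (oppPl p) :=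
    fun b => Function.update_of_ne (oppPl_ne p) _ _
  unfold gPayoff sgn Xv
  by_cases h : p.val.1 < p.val.2 <;>
    simp only [h, if_pos, if_neg, if_true, if_false, hchi, hopp,
      Function.update_self, actVal] <;> norm_num <;>
    by_cases h1 : a p = true <;> by_cases h2 : a (oppPl p) = true <;>
      simp [h1, h2] <;> ring

/-- In the game `G`, if `P` (given by weights `μ`) is an ε-coarse correlated
equilibrium, then `|E_{a∼P}[a_{(i,j)} a_{(j,i)} χ_{S_{{i,j}}}(a)]| ≤ 2ε` for
every player `(i,j)`. -/
theorem stmt15 (s : ℕ) (hs : 2 ≤ s) (ε : ℝ) (hε : 0 < ε)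
    (μ : (GPlayer s → Bool) → ℝ)
    (hμ0 : ∀ a, 0 ≤ μ a) (hμ1 : ∑ a, μ a = 1)
    (hcce : ∀ (p : GPlayer s) (b : Bool),
      ∑ a, μ a * (gPayoff p (Function.update a p b) - gPayoff p a) ≤ ε) :
    ∀ p : GPlayer s,
      |∑ a, μ a * (actVal (a p) * actVal (a (oppPl p)) *
        chi (Sij s p.val.1 p.val.2) a)| ≤ 2 * ε := by
  have key : ∀ p : GPlayer s, -(sgn p) * ∑ a, μ a * Xv p a ≤ 2 * ε := by
    intro p
    have h1 := hcce p true
    have h2 := hcce p false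
    have : ∑ a, μ a * (-(sgn p) * Xv p a) ≤ 2 * ε := by
      calc ∑ a, μ a * (-(sgn p) * Xv p a)
          = (∑ a, μ a * (gPayoff p (Function.update a p true) - gPayoff p a))
            + ∑ a, μ a * (gPayoff p (Function.update a p false) - gPayoff p a) := by
            rw [← Finset.sum_add_distrib]
            refine Finset.sum_congr rfl fun a _ => ?_
            rw [← mul_add, diff_sum]
        _ ≤ ε + ε := add_le_add h1 h2
        _ = 2 * ε := by ring
    calc -(sgn p) * ∑ a, μ a * Xv p a = ∑ a, μ a * (-(sgn p) * Xv p a) := by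
          rw [Finset.mul_sum]; exact Finset.sum_congr rfl fun a _ => by ring
      _ ≤ 2 * ε := this
  intro p
  have hX : ∀ a, Xv (oppPl p) a = Xv p a := by
    intro a
    unfold Xv
    rw [oppPl_oppPl]
    show actVal (a (oppPl p)) * actVal (a p) * chi (Sij s p.val.2 p.val.1) a = _
    rw [Sij_symm]; ring
  have hsgn : sgn (oppPl p) = -(sgn p) := by
    unfold sgn
    show (if p.val.2 < p.val.1 then (1:ℝ) else -1) = _
    rcases lt_or_gt_of_ne p.prop with h | h
    · simp [h, not_lt_of_gt h]
    · simp [h, not_lt_of_gt h]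
  have A := key p
  have B := key (oppPl p)
  rw [hsgn] at B
  simp only [hX] at B
  have hS : ∑ a, μ a * Xv p a
      = ∑ a, μ a * (actVal (a p) * actVal (a (oppPl p)) * chi (Sij s p.val.1 p.val.2) a) := rfl
  rw [← hS]
  unfold sgn at A B
  by_cases h : p.val.1 < p.val.2 <;> simp only [h, if_true, if_false] at A B <;>
    rw [abs_le] <;> constructor <;> nlinarith
end

section
/- Multi-coset affine arithmetic-splitting criterion: with A = ⋃_{h∈H} ({h} × J_h) in G = Z × (R/Z), where H ⊆ qZ is finite, and translation sets T_r = {(qk+r, β_r + k α_r) : k ∈ Z} for 0 ≤ r ≤ q−1, the translates A + t for t ∈ ⋃_r T_r tile G (a.e. disjoint cover) if and only if for every r, the sets J_h − (h/q)α_r over h ∈ H partition the circle R/Z up to null sets. -/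
/-!
Slicing `ℤ × 𝕋` along `ℤ`, a set is null for `count × volume` iff every slice `{n} × 𝕋` is
null. Write `n = c q + s` with `0 ≤ s < q`. Since `H ⊆ qℤ`, the translates meeting the slice at `n`
are those by elements of `T_s`, one for each `h ∈ H` (namely `k = c - h/q`), and there the
translate of `{h} × J h` is `J h + β_s + k α_s = (J h - (h/q) α_s) + (β_s + c α_s)`. So the slice
at `n` of the family of translates is the family `J h - (h/q) α_s`, `h ∈ H`, rotated by
`β_s + c α_s`, and rotations preserve Lebesgue measure.
-/

open MeasureTheory Set

theorem preimage_prodMk_image_add_right {G K : Type*} [AddGroup G] [AddGroup K]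
    (S : Set (G × K)) (t : G × K) (g : G) :
    Prod.mk g ⁻¹' ((· + t) '' S) = (· + t.2) '' (Prod.mk (g - t.1) ⁻¹' S) := by
  rw [image_add_right, image_add_right, sub_eq_add_neg]
  rfl

theorem MeasureTheory.Measure.count_prod_eq_zero_iff {α β : Type*} [MeasurableSpace α]
    [MeasurableSingletonClass α] [Countable α] [MeasurableSpace β] (ν : Measure β) [SFinite ν]
    (S : Set (α × β)) :
    Measure.count.prod ν S = 0 ↔ ∀ a, ν (Prod.mk a ⁻¹' S) = 0 := by
  simp_rw [Measure.count, Measure.prod_sum_left, Measure.sum_apply_of_countable,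
    ENNReal.tsum_eq_zero, Measure.dirac_prod, (measurableEmbedding_prodMk_left _).map_apply]

section Translate

variable {G : Type*} [AddGroup G] [MeasurableSpace G] [MeasurableAdd G] (μ : Measure G)
  [μ.IsAddRightInvariant] (g : G)

theorem measure_image_add_right (S : Set G) : μ ((· + g) '' S) = μ S := by
  rw [image_add_right, measure_preimage_add_right]

theorem aedisjoint_image_add_right_iff {S S' : Set G} :
    AEDisjoint μ ((· + g) '' S) ((· + g) '' S') ↔ AEDisjoint μ S S' := by
  rw [AEDisjoint, AEDisjoint, ← image_inter (add_left_injective g), measure_image_add_right]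

theorem measure_univ_diff_image_add_right (S : Set G) :
    μ (univ \ (· + g) '' S) = μ (univ \ S) := by
  have hbij : Function.Bijective (· + g) := (Equiv.addRight g).bijective
  rw [← compl_eq_univ_sdiff, ← compl_eq_univ_sdiff, ← image_compl_eq hbij,
    measure_image_add_right]

end Translate

theorem Fin.eq_of_dvd_sub {q : ℕ} {r s : Fin q} (h : (q : ℤ) ∣ (s : ℤ) - r) : r = s := by
  have := Int.eq_zero_of_abs_lt_dvd h (by rw [abs_lt]; omega)
  omega

theorem Int.forall_iff_forall_mul_add_fin {q : ℕ} [NeZero q] {p : ℤ → Prop} :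
    (∀ n, p n) ↔ ∀ (c : ℤ) (s : Fin q), p (c * q + s) :=
  ⟨fun h _ _ => h _, fun h n => by rw [← (Int.divModEquiv q).symm_apply_apply n]; exact h _ _⟩

local notation "𝕋" => AddCircle (1 : ℝ)

section Tiling

variable {q : ℕ} (H : Finset ℤ) (J : ℤ → Set 𝕋) (β α : Fin q → 𝕋)

def tile : Set (ℤ × 𝕋) := ⋃ h ∈ H, {h} ×ˢ J h

def translation (r : Fin q) (k : ℤ) : ℤ × 𝕋 := ((q : ℤ) * k + r, β r + k • α r)

def translationSet : Set (ℤ × 𝕋) := {t | ∃ r k, t = translation β α r k}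

def normalizedFiber (r : Fin q) (h : ℤ) : Set 𝕋 := (· - (h / (q : ℤ)) • α r) '' J h

theorem preimage_prodMk_tile (n : ℤ) : Prod.mk n ⁻¹' tile H J = if n ∈ H then J n else ∅ := by
  ext x
  by_cases hn : n ∈ H <;> simp [tile, hn]

theorem image_add_translation_eq (r : Fin q) (k h : ℤ) :
    (· + (translation β α r k).2) '' J h =
      (· + (β r + (k + h / (q : ℤ)) • α r)) '' normalizedFiber J α r h := by
  rw [normalizedFiber, image_image]
  congr 1
  funext x
  simp only [translation, add_zsmul]
  abel

variable {H}

theorem preimage_prodMk_image_add_translation (hH : ∀ h ∈ H, (q : ℤ) ∣ h) (s r : Fin q)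
    (c k : ℤ) :
    Prod.mk (c * q + s) ⁻¹' ((· + translation β α r k) '' tile H J) =
      if r = s ∧ (c - k) * q ∈ H then
        (· + (β s + c • α s)) '' normalizedFiber J α s ((c - k) * q)
      else ∅ := by
  have hdiff : c * q + s - (translation β α r k).1 = (c - k) * q + (s - r) := by
    rw [translation]; ring
  rw [preimage_prodMk_image_add_right, preimage_prodMk_tile, hdiff]
  split_ifs with hmem hrs hrs
  · obtain ⟨rfl, -⟩ := hrs
    rw [image_add_translation_eq, sub_self, add_zero, Int.mul_ediv_cancel _ (mod_cast r.pos.ne'),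
      add_sub_cancel]
  · have hrs' : r = s := Fin.eq_of_dvd_sub <| (Int.dvd_add_right (dvd_mul_left _ _)).1 (hH _ hmem)
    subst hrs'
    exact absurd ⟨rfl, by simpa using hmem⟩ hrs
  · obtain ⟨rfl, hmem'⟩ := hrs
    exact absurd (by simpa using hmem') hmem
  · exact image_empty _

theorem preimage_prodMk_image_add_translation_of_mem (hH : ∀ h ∈ H, (q : ℤ) ∣ h) {h : ℤ}
    (hh : h ∈ H) (s : Fin q) (c : ℤ) :
    Prod.mk (c * q + s) ⁻¹' ((· + translation β α s (c - h / q)) '' tile H J) =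
      (· + (β s + c • α s)) '' normalizedFiber J α s h := by
  rw [preimage_prodMk_image_add_translation J β α hH, sub_sub_cancel,
    Int.ediv_mul_cancel (hH h hh), if_pos ⟨rfl, hh⟩]

theorem preimage_prodMk_iUnion_image_add_translation (hH : ∀ h ∈ H, (q : ℤ) ∣ h) (s : Fin q)
    (c : ℤ) :
    Prod.mk (c * q + s) ⁻¹' (⋃ t ∈ translationSet β α, (· + t) '' tile H J) =
      (· + (β s + c • α s)) '' ⋃ h ∈ H, normalizedFiber J α s h := by
  apply Subset.antisymm
  · intro x hx
    obtain ⟨t, ⟨r, k, rfl⟩, hx⟩ := mem_iUnion₂.1 (mem_preimage.1 hx)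
    rw [← mem_preimage, preimage_prodMk_image_add_translation J β α hH] at hx
    split_ifs at hx with hrk
    · exact image_mono (subset_biUnion_of_mem hrk.2) hx
    · exact hx.elim
  · rw [image_iUnion₂]
    refine iUnion₂_subset fun h hh => ?_
    rw [← preimage_prodMk_image_add_translation_of_mem J β α hH hh]
    exact preimage_mono (subset_biUnion_of_mem (u := fun t => (· + t) '' tile H J)
      ⟨s, c - h / q, rfl⟩)

variable [NeZero q] (hH : ∀ h ∈ H, (q : ℤ) ∣ h)
include hH

theorem measure_univ_diff_iUnion_image_add_translation_eq_zero_iff :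
    Measure.count.prod volume (univ \ ⋃ t ∈ translationSet β α, (· + t) '' tile H J) = 0 ↔
      ∀ r, volume (univ \ ⋃ h ∈ H, normalizedFiber J α r h) = 0 := by
  rw [Measure.count_prod_eq_zero_iff, Int.forall_iff_forall_mul_add_fin (q := q)]
  simp only [preimage_sdiff, preimage_univ, preimage_prodMk_iUnion_image_add_translation J β α hH,
    measure_univ_diff_image_add_right]
  exact ⟨fun h r => h 0 r, fun h _ r => h r⟩

theorem aedisjoint_image_add_translation_iff :
    (∀ t₁ ∈ translationSet β α, ∀ t₂ ∈ translationSet β α, t₁ ≠ t₂ →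
        AEDisjoint (Measure.count.prod volume) ((· + t₁) '' tile H J) ((· + t₂) '' tile H J)) ↔
      ∀ r, ∀ h₁ ∈ H, ∀ h₂ ∈ H, h₁ ≠ h₂ →
        AEDisjoint volume (normalizedFiber J α r h₁) (normalizedFiber J α r h₂) := by
  constructor
  · intro hT r h₁ hh₁ h₂ hh₂ hne
    have hne' : translation β α r (0 - h₁ / q) ≠ translation β α r (0 - h₂ / q) := by
      intro heq
      apply hne
      have : h₁ / q = h₂ / q := by simpa [translation, NeZero.ne q] using congrArg Prod.fst heq
      rw [← Int.ediv_mul_cancel (hH _ hh₁), ← Int.ediv_mul_cancel (hH _ hh₂), this]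
    have := (Measure.count_prod_eq_zero_iff _ _).1
      (hT _ ⟨_, _, rfl⟩ _ ⟨_, _, rfl⟩ hne') ((0 : ℤ) * q + r)
    rwa [preimage_inter, preimage_prodMk_image_add_translation_of_mem J β α hH hh₁,
      preimage_prodMk_image_add_translation_of_mem J β α hH hh₂, ← AEDisjoint,
      aedisjoint_image_add_right_iff] at this
  · rintro hD _ ⟨r₁, k₁, rfl⟩ _ ⟨r₂, k₂, rfl⟩ hne
    rw [AEDisjoint, Measure.count_prod_eq_zero_iff, Int.forall_iff_forall_mul_add_fin (q := q)]
    intro c s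
    rw [preimage_inter, preimage_prodMk_image_add_translation J β α hH,
      preimage_prodMk_image_add_translation J β α hH]
    split_ifs with hrk₁ hrk₂
    · obtain ⟨rfl, hm₁⟩ := hrk₁
      obtain ⟨rfl, hm₂⟩ := hrk₂
      refine (aedisjoint_image_add_right_iff _ _).2 (hD _ _ hm₁ _ hm₂ fun heq => hne ?_)
      have : k₁ = k₂ := by
        have := mul_right_cancel₀ (by simp [NeZero.ne q]) heq
        omega
      rw [this]
    all_goals simp only [inter_empty, empty_inter, measure_empty]

end Tiling

theorem stmt18_general (q : ℕ) (hq : 1 ≤ q) (H : Finset ℤ) (hH : ∀ h ∈ H, (q : ℤ) ∣ h)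
    (J : ℤ → Set (AddCircle (1 : ℝ)))
    (β α : Fin q → AddCircle (1 : ℝ)) :
    (let μ : Measure (ℤ × AddCircle (1 : ℝ)) := Measure.count.prod volume
     let A : Set (ℤ × AddCircle (1 : ℝ)) := ⋃ h ∈ H, {(h : ℤ)} ×ˢ J h
     let T : Set (ℤ × AddCircle (1 : ℝ)) :=
       {t | ∃ (r : Fin q) (k : ℤ), t = ((q : ℤ) * k + (r : ℤ), β r + k • α r)}
     (∀ t₁ ∈ T, ∀ t₂ ∈ T, t₁ ≠ t₂ →
        MeasureTheory.AEDisjoint μ ((· + t₁) '' A) ((· + t₂) '' A)) ∧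
       μ (Set.univ \ ⋃ t ∈ T, (· + t) '' A) = 0) ↔
    (∀ r : Fin q,
      (∀ h₁ ∈ H, ∀ h₂ ∈ H, h₁ ≠ h₂ →
        MeasureTheory.AEDisjoint volume
          ((· - (h₁ / (q : ℤ)) • α r) '' J h₁)
          ((· - (h₂ / (q : ℤ)) • α r) '' J h₂)) ∧
      volume (Set.univ \ ⋃ h ∈ H, (· - (h / (q : ℤ)) • α r) '' J h) = 0) := by
  have : NeZero q := ⟨by omega⟩
  exact ((aedisjoint_image_add_translation_iff J β α hH).and
    (measure_univ_diff_iUnion_image_add_translation_eq_zero_iff J β α hH)).trans forall_and.symm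

/-- Multi-coset affine arithmetic-splitting criterion. Work in
`G = ℤ × ℝ/ℤ` with counting measure times Lebesgue (Haar) measure. Let
`H ⊆ qℤ` be finite, `J h ⊆ ℝ/ℤ` measurable, `A = ⋃_{h∈H} {h} × J h`, and for
`0 ≤ r < q` let `T_r = {(qk+r, β_r + k·α_r) : k ∈ ℤ}`. Then the translates
`A + t`, `t ∈ ⋃_r T_r`, tile `G` (pairwise a.e.-disjoint, union conull) iff
for every `r` the sets `J h − (h/q)·α_r`, `h ∈ H`, partition the circle up to
null sets. -/
theorem stmt18 (q : ℕ) (hq : 1 ≤ q) (H : Finset ℤ) (hH : ∀ h ∈ H, (q : ℤ) ∣ h)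
    (J : ℤ → Set (AddCircle (1 : ℝ))) (hJ : ∀ h, MeasurableSet (J h))
    (β α : Fin q → AddCircle (1 : ℝ)) :
    (let μ : Measure (ℤ × AddCircle (1 : ℝ)) := Measure.count.prod volume
     let A : Set (ℤ × AddCircle (1 : ℝ)) := ⋃ h ∈ H, {(h : ℤ)} ×ˢ J h
     let T : Set (ℤ × AddCircle (1 : ℝ)) :=
       {t | ∃ (r : Fin q) (k : ℤ), t = ((q : ℤ) * k + (r : ℤ), β r + k • α r)}
     (∀ t₁ ∈ T, ∀ t₂ ∈ T, t₁ ≠ t₂ →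
        MeasureTheory.AEDisjoint μ ((· + t₁) '' A) ((· + t₂) '' A)) ∧
       μ (Set.univ \ ⋃ t ∈ T, (· + t) '' A) = 0) ↔
    (∀ r : Fin q,
      (∀ h₁ ∈ H, ∀ h₂ ∈ H, h₁ ≠ h₂ →
        MeasureTheory.AEDisjoint volume
          ((· - (h₁ / (q : ℤ)) • α r) '' J h₁)
          ((· - (h₂ / (q : ℤ)) • α r) '' J h₂)) ∧
      volume (Set.univ \ ⋃ h ∈ H, (· - (h / (q : ℤ)) • α r) '' J h) = 0) :=
  stmt18_general q hq H hH J β α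
end

section
/- Fiberwise criterion for column tiles: if A = ⋃_{i=1}^ℓ ({n_i} × I_i) ⊆ Z × (R/Z) is a column tile, then there exists a positive integer m such that every fiber I_i has Lebesgue measure exactly 1/m. -/
open MeasureTheory

/-! Slicing at height `n i` turns the tiling of `C × 𝕋` by the vertical translates of `A` into a
tiling of `𝕋` by the translates `I i + λ`, `λ ∈ Λ`, because a null set for counting × Lebesgue
measure has null slices. Translation invariance then gives `#Λ • vol (I i) = vol 𝕋 = 1`, so
`m = #Λ` works for every fiber at once. -/

namespace MeasureTheory

lemma Measure.prod_null_preimage_prodMk {α β : Type*} [MeasurableSpace α] [MeasurableSpace β]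
    {μ : Measure α} {ν : Measure β} [SFinite ν] {S : Set (α × β)} (hS : μ.prod ν S = 0)
    {a : α} (ha : μ {a} ≠ 0) : ν (Prod.mk a ⁻¹' S) = 0 := by
  have hle : μ {a} * ν (Prod.mk a ⁻¹' S) ≤ 0 := by
    rw [← Measure.prod_prod, ← hS]
    refine measure_mono ?_
    rintro ⟨x, y⟩ ⟨rfl : x = a, hy⟩
    exact hy
  simpa [ha] using hle

lemma card_smul_measure_eq_of_translates_tile {G : Type*} [MeasurableSpace G] [AddGroup G]
    [MeasurableAdd G] {ν : Measure G} [ν.IsAddRightInvariant] {s : Set G}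
    (hs : MeasurableSet s) {Λ : Finset G}
    (hdisj : (Λ : Set G).Pairwise (Function.onFun (AEDisjoint ν) fun l => (· + l) '' s))
    (hcov : ν (Set.univ \ ⋃ l ∈ Λ, (· + l) '' s) = 0) :
    Λ.card • ν s = ν Set.univ := by
  have hcov' : (⋃ l ∈ Λ, (· + l) '' s) =ᵐ[ν] Set.univ := by
    rwa [ae_eq_univ, Set.compl_eq_univ_sdiff]
  rw [← measure_congr hcov', measure_biUnion_finset₀ hdisj fun l _ => ?_]
  · simp only [Set.image_add_right, measure_preimage_add_right, Finset.sum_const]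
  · rw [Set.image_add_right]
    exact (measurable_add_const _ hs).nullMeasurableSet

end MeasureTheory

lemma Set.preimage_prodMk_image_add_mk_zero {G H : Type*} [AddGroup G] [AddGroup H]
    (S : Set (G × H)) (k : G) (l : H) :
    Prod.mk k ⁻¹' ((· + ((0 : G), l)) '' S) = (· + l) '' (Prod.mk k ⁻¹' S) := by
  simp only [Set.image_add_right]
  ext y
  simp

lemma Set.preimage_prodMk_iUnion_singleton_prod {ι α β : Type*} {n : ι → α}
    (hn : Function.Injective n) (I : ι → Set β) (i : ι) :
    Prod.mk (n i) ⁻¹' (⋃ j, {n j} ×ˢ I j) = I i := by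
  ext y
  simp [hn.eq_iff]

/-- Fiberwise criterion for column tiles. Work in `ℤ × ℝ/ℤ` with counting
measure times Lebesgue (Haar) measure. Let `A = ⋃_{i} {n i} × I i` with the
`n i` distinct and the fibers `I i` measurable of positive measure. If `A` is
a column tile — i.e. there are a finite `C ⊆ ℤ` and a finite nonempty
`Λ ⊆ ℝ/ℤ` with `A ⊆ C × ℝ/ℤ` such that the vertical translates
`A + (0,λ)`, `λ ∈ Λ`, are pairwise a.e.-disjoint and cover `C × ℝ/ℤ` up to a
null set — then there is `m ≥ 1` with `volume (I i) = 1/m` for every `i`. -/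
theorem stmt19 (ℓ : ℕ) (n : Fin ℓ → ℤ) (hn : Function.Injective n)
    (I : Fin ℓ → Set (AddCircle (1 : ℝ))) (hImeas : ∀ i, MeasurableSet (I i))
    (hIpos : ∀ i, volume (I i) ≠ 0)
    (hcol :
      let μ : Measure (ℤ × AddCircle (1 : ℝ)) := Measure.count.prod volume
      let A : Set (ℤ × AddCircle (1 : ℝ)) := ⋃ i, {n i} ×ˢ I i
      ∃ (C : Finset ℤ) (Λ : Finset (AddCircle (1 : ℝ))), Λ.Nonempty ∧
        A ⊆ (C : Set ℤ) ×ˢ Set.univ ∧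
        (∀ l₁ ∈ Λ, ∀ l₂ ∈ Λ, l₁ ≠ l₂ →
          MeasureTheory.AEDisjoint μ
            ((· + ((0 : ℤ), l₁)) '' A) ((· + ((0 : ℤ), l₂)) '' A)) ∧
        μ (((C : Set ℤ) ×ˢ Set.univ) \ ⋃ l ∈ Λ, (· + ((0 : ℤ), l)) '' A) = 0) :
    ∃ m : ℕ, 0 < m ∧ ∀ i, volume (I i) = (m : ENNReal)⁻¹ := by
  obtain ⟨C, Λ, hΛ, hsub, hdisj, hcov⟩ := hcol
  refine ⟨Λ.card, hΛ.card_pos, fun i => ?_⟩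
  have hcount : (Measure.count {n i} : ENNReal) ≠ 0 := by simp
  have hfiber : ∀ l,
      Prod.mk (n i) ⁻¹' ((· + ((0 : ℤ), l)) '' ⋃ j, {n j} ×ˢ I j) = (· + l) '' I i := fun l => by
    rw [Set.preimage_prodMk_image_add_mk_zero, Set.preimage_prodMk_iUnion_singleton_prod hn]
  have hniC : n i ∈ C := by
    obtain ⟨x, hx⟩ := nonempty_of_measure_ne_zero (hIpos i)
    have hmem : (n i, x) ∈ ⋃ j, {n j} ×ˢ I j := Set.mem_iUnion.mpr ⟨i, rfl, hx⟩
    exact (hsub hmem).1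
  have htile : Λ.card • volume (I i) = volume (Set.univ : Set (AddCircle (1 : ℝ))) := by
    refine card_smul_measure_eq_of_translates_tile (hImeas i) (fun l₁ h₁ l₂ h₂ hne => ?_) ?_
    · have := Measure.prod_null_preimage_prodMk (hdisj l₁ h₁ l₂ h₂ hne) hcount
      rwa [Set.preimage_inter, hfiber, hfiber] at this
    · have := Measure.prod_null_preimage_prodMk hcov hcount
      rwa [Set.preimage_sdiff, Set.mk_preimage_prod_right hniC, Set.preimage_iUnion₂,
        Set.iUnion₂_congr fun l _ => hfiber l] at this
  rw [AddCircle.measure_univ, ENNReal.ofReal_one, nsmul_eq_mul, mul_comm] at htile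
  exact ENNReal.eq_inv_of_mul_eq_one_left htile
end
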